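/- arXiv:1211.5771 — 6 statements merged into one kernel-verified Lean document; each statement's English description precedes it below -/
import Mathlib

section
/- Let F be a finite field of odd order q, let χ be a nontrivial multiplicative character of F (extended by χ(0)=0), and let u, v ∈ F be nonzero. Then for any subsets A, B ⊆ F, |∑_{a∈A} ∑_{b∈B} χ(u·a² + v·b)| ≤ 2·√(q·|A|·|B|). -/
open Finset

section main

open scoped Classical in
lemma aux_key {F : Type} [Field F] [Fintype F] (χ : MulChar F ℂ) (hχ : χ ≠ 1) (d : F) :
    ∑ c : F, χ c * χ⁻¹ (c + d) = if d = 0 then ((Fintype.card F : ℂ) - 1) else -1 := by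
  classical
  have hmul : ∀ c : F, χ c * χ⁻¹ (c + d) = χ (c * (c + d)⁻¹) := fun c => by
    rw [MulChar.inv_apply', map_mul]
  rw [Finset.sum_congr rfl fun c _ => hmul c]
  split_ifs with hd
  · subst hd
    have h : ∀ c : F, χ (c * (c + 0)⁻¹) = if c = 0 then 0 else 1 := by
      intro c
      by_cases h : c = 0
      · simp [h, MulChar.map_zero]
      · rw [add_zero, mul_inv_cancel₀ h, map_one, if_neg h]
    have h' : ∀ c : F, (if c = 0 then (0:ℂ) else 1) = 1 - if c = 0 then 1 else 0 := fun c => by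
      split_ifs <;> ring
    rw [Finset.sum_congr rfl fun c _ => (h c).trans (h' c), Finset.sum_sub_distrib,
      Finset.sum_const, Finset.sum_ite_eq' Finset.univ (0:F) (fun _ => (1:ℂ))]
    simp [Finset.card_univ]
  · -- d ≠ 0
    have hsub : (∑ c : F, χ (c * (c + d)⁻¹)) = ∑ c ∈ Finset.univ \ {0, -d}, χ (c * (c + d)⁻¹) := by
      refine (Finset.sum_subset (Finset.subset_univ _) ?_).symm
      intro c _ hc
      simp only [Finset.mem_sdiff, Finset.mem_univ, true_and, Finset.mem_insert,
        Finset.mem_singleton, not_and_or, not_not] at hc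
      rcases hc with h | h
      · rw [h]; simp [MulChar.map_zero]
      · rw [h]; simp [MulChar.map_zero]
    have hbij : ∑ c ∈ Finset.univ \ {0, -d}, χ (c * (c + d)⁻¹)
        = ∑ t ∈ Finset.univ \ {0, 1}, χ t := by
      refine Finset.sum_nbij' (fun c => c * (c + d)⁻¹) (fun t => t * d * (1 - t)⁻¹) ?_ ?_ ?_ ?_ ?_
      · intro c hc
        simp only [Finset.mem_sdiff, Finset.mem_univ, true_and, Finset.mem_insert,
          Finset.mem_singleton, not_or] at hc ⊢
        obtain ⟨hc0, hcd⟩ := hc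
        have hcd' : c + d ≠ 0 := fun h => hcd (by linear_combination h)
        refine ⟨mul_ne_zero hc0 (inv_ne_zero hcd'), fun h => hd ?_⟩
        field_simp at h
        linear_combination -h
      · intro t ht
        simp only [Finset.mem_sdiff, Finset.mem_univ, true_and, Finset.mem_insert,
          Finset.mem_singleton, not_or] at ht ⊢
        obtain ⟨ht0, ht1⟩ := ht
        have h1t : (1 : F) - t ≠ 0 := sub_ne_zero.mpr (fun h => ht1 h.symm)
        refine ⟨mul_ne_zero (mul_ne_zero ht0 hd) (inv_ne_zero h1t), fun h => ?_⟩
        field_simp at h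
        exact hd (by linear_combination d * h)
      · intro c hc
        simp only [Finset.mem_sdiff, Finset.mem_univ, true_and, Finset.mem_insert,
          Finset.mem_singleton, not_or] at hc
        obtain ⟨hc0, hcd⟩ := hc
        have hcd' : c + d ≠ 0 := fun h => hcd (by linear_combination h)
        have h1 : (1 : F) - c * (c + d)⁻¹ = d * (c + d)⁻¹ := by field_simp; ring
        rw [h1, mul_inv, inv_inv]
        field_simp
      · intro t ht
        simp only [Finset.mem_sdiff, Finset.mem_univ, true_and, Finset.mem_insert,
          Finset.mem_singleton, not_or] at ht
        obtain ⟨ht0, ht1⟩ := ht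
        have h1t : (1 : F) - t ≠ 0 := sub_ne_zero.mpr (fun h => ht1 h.symm)
        have h2 : t * d * (1 - t)⁻¹ + d = d * (1 - t)⁻¹ := by field_simp; ring
        rw [h2, mul_inv, inv_inv]
        field_simp
      · exact fun _ _ => rfl
    rw [hsub, hbij, Finset.sum_sdiff_eq_sub (Finset.subset_univ _),
      MulChar.sum_eq_zero_of_ne_one hχ, Finset.sum_pair (zero_ne_one (α := F))]
    simp [MulChar.map_zero]

variable {F : Type} [Field F] [Fintype F]

open scoped Classical in
lemma aux_key2 (χ : MulChar F ℂ) (hχ : χ ≠ 1) {v : F} (hv : v ≠ 0) (x y : F) :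
    ∑ b : F, χ (x + v * b) * χ⁻¹ (y + v * b)
      = if y = x then ((Fintype.card F : ℂ) - 1) else -1 := by
  have h1 : ∑ b : F, χ (x + v * b) * χ⁻¹ (y + v * b)
      = ∑ c : F, χ (x + c) * χ⁻¹ (y + c) :=
    Fintype.sum_equiv (Equiv.mulLeft₀ v hv) _ _ (fun b => rfl)
  have h2 : ∑ c : F, χ (x + c) * χ⁻¹ (y + c)
      = ∑ c : F, χ c * χ⁻¹ (c + (y - x)) := by
    refine Fintype.sum_equiv (Equiv.addLeft x) _ _ (fun c => ?_)
    simp only [Equiv.coe_addLeft]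
    rw [show x + c + (y - x) = y + c from by ring]
  rw [h1, h2, aux_key χ hχ (y - x)]
  simp [sub_eq_zero]

theorem stmt_4 (F : Type) [Field F] [Fintype F] (hq : Odd (Fintype.card F))
    (χ : MulChar F ℂ) (hχ : χ ≠ 1) (u v : F) (hu : u ≠ 0) (hv : v ≠ 0)
    (A B : Finset F) :
    ‖∑ a ∈ A, ∑ b ∈ B, χ (u * a ^ 2 + v * b)‖ ≤
      2 * Real.sqrt (Fintype.card F * A.card * B.card) := by
  classical
  set q := Fintype.card F with hqdef
  set T : F → ℂ := fun b => ∑ a ∈ A, χ (u * a ^ 2 + v * b) with hT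
  have conj_eq : ∀ z : F, (starRingEnd ℂ) (χ z) = χ⁻¹ z := fun z => MulChar.star_apply' χ z
  have hE : ∑ b : F, T b * (starRingEnd ℂ) (T b)
      = ∑ a ∈ A, ∑ a' ∈ A, (if u * a' ^ 2 = u * a ^ 2 then ((q : ℂ) - 1) else -1) := by
    have expand : ∀ b : F, T b * (starRingEnd ℂ) (T b)
        = ∑ a ∈ A, ∑ a' ∈ A, χ (u * a ^ 2 + v * b) * χ⁻¹ (u * a' ^ 2 + v * b) := by
      intro b
      rw [hT, map_sum, Finset.sum_mul_sum]
      exact Finset.sum_congr rfl fun a _ => Finset.sum_congr rfl fun a' _ => by rw [conj_eq]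
    rw [Finset.sum_congr rfl fun b _ => expand b, Finset.sum_comm]
    refine Finset.sum_congr rfl fun a _ => ?_
    rw [Finset.sum_comm]
    refine Finset.sum_congr rfl fun a' _ => ?_
    exact aux_key2 χ hχ hv _ _
  have hq1 : (1 : ℝ) ≤ q := by exact_mod_cast Fintype.card_pos
  -- real bound
  have hreal : ∑ b : F, Complex.normSq (T b) ≤ 2 * q * A.card := by
    set R : ℝ := ∑ a ∈ A, ∑ a' ∈ A, (if u * a' ^ 2 = u * a ^ 2 then ((q : ℝ) - 1) else -1)
      with hR
    have hcast : ((∑ b : F, Complex.normSq (T b) : ℝ) : ℂ) = ((R : ℝ) : ℂ) := by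
      calc ((∑ b : F, Complex.normSq (T b) : ℝ) : ℂ)
          = ∑ b : F, ((Complex.normSq (T b) : ℝ) : ℂ) := by push_cast; rfl
        _ = ∑ b : F, T b * (starRingEnd ℂ) (T b) := by
            exact Finset.sum_congr rfl fun b _ => (Complex.mul_conj (T b)).symm
        _ = ∑ a ∈ A, ∑ a' ∈ A, (if u * a' ^ 2 = u * a ^ 2 then ((q : ℂ) - 1) else -1) := hE
        _ = ((R : ℝ) : ℂ) := by
            rw [hR]
            push_cast [apply_ite ((↑) : ℝ → ℂ)]
            rfl
    have heq : ∑ b : F, Complex.normSq (T b) = R := by exact_mod_cast hcast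
    have hrow : ∀ a ∈ A, (∑ a' ∈ A, (if u * a' ^ 2 = u * a ^ 2 then ((q : ℝ) - 1) else -1))
        ≤ 2 * q := by
      intro a _
      have h1 : (∑ a' ∈ A, (if u * a' ^ 2 = u * a ^ 2 then ((q : ℝ) - 1) else -1))
          ≤ ∑ a' ∈ A, (if u * a' ^ 2 = u * a ^ 2 then ((q : ℝ) - 1) else 0) := by
        refine Finset.sum_le_sum fun a' _ => ?_
        split_ifs
        · exact le_rfl
        · norm_num
      have h2 : (∑ a' ∈ A, (if u * a' ^ 2 = u * a ^ 2 then ((q : ℝ) - 1) else 0))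
          = ((A.filter (fun a' => u * a' ^ 2 = u * a ^ 2)).card : ℝ) * ((q : ℝ) - 1) := by
        rw [Finset.sum_ite, Finset.sum_const, Finset.sum_const]
        simp [nsmul_eq_mul]
      have hsubs : A.filter (fun a' => u * a' ^ 2 = u * a ^ 2) ⊆ {a, -a} := by
        intro x hx
        rw [Finset.mem_filter] at hx
        have hx2 : x ^ 2 = a ^ 2 := mul_left_cancel₀ hu hx.2
        have hfac : (x - a) * (x + a) = 0 := by linear_combination hx2
        rcases mul_eq_zero.mp hfac with h | h
        · simp only [Finset.mem_insert, Finset.mem_singleton]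
          left; linear_combination h
        · simp only [Finset.mem_insert, Finset.mem_singleton]
          right; linear_combination h
      have hcard : ((A.filter (fun a' => u * a' ^ 2 = u * a ^ 2)).card : ℝ) ≤ 2 := by
        have h2' : ({a, -a} : Finset F).card ≤ 2 :=
          (Finset.card_insert_le _ _).trans (by simp)
        have := (Finset.card_le_card hsubs).trans h2'
        exact_mod_cast this
      calc (∑ a' ∈ A, (if u * a' ^ 2 = u * a ^ 2 then ((q : ℝ) - 1) else -1))
          ≤ ((A.filter (fun a' => u * a' ^ 2 = u * a ^ 2)).card : ℝ) * ((q : ℝ) - 1) :=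
            h1.trans_eq h2
        _ ≤ 2 * ((q : ℝ) - 1) := by
            apply mul_le_mul_of_nonneg_right hcard (by linarith)
        _ ≤ 2 * q := by linarith
    calc ∑ b : F, Complex.normSq (T b) = R := heq
      _ ≤ ∑ a ∈ A, (2 * (q : ℝ)) := Finset.sum_le_sum hrow
      _ = A.card * (2 * q) := by rw [Finset.sum_const, nsmul_eq_mul]
      _ = 2 * q * A.card := by ring
  -- Cauchy-Schwarz and conclusion
  rw [Finset.sum_comm]
  show ‖∑ b ∈ B, T b‖ ≤ 2 * Real.sqrt (q * A.card * B.card)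
  have habs : ‖∑ b ∈ B, T b‖ ≤ ∑ b ∈ B, ‖T b‖ :=
    norm_sum_le _ _
  have hCS : (∑ b ∈ B, ‖T b‖) ^ 2 ≤ B.card * ∑ b ∈ B, ‖T b‖ ^ 2 :=
    sq_sum_le_card_mul_sum_sq
  have hsq : ∑ b ∈ B, ‖T b‖ ^ 2 ≤ 2 * q * A.card := by
    calc ∑ b ∈ B, ‖T b‖ ^ 2 = ∑ b ∈ B, Complex.normSq (T b) := by
          simp [Complex.sq_norm]
      _ ≤ ∑ b : F, Complex.normSq (T b) :=
          Finset.sum_le_sum_of_subset_of_nonneg (Finset.subset_univ _)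
            (fun _ _ _ => Complex.normSq_nonneg _)
      _ ≤ 2 * q * A.card := hreal
  have hnn : (0 : ℝ) ≤ (q : ℝ) * A.card * B.card := by positivity
  have key : (‖∑ b ∈ B, T b‖) ^ 2 ≤ 4 * ((q : ℝ) * A.card * B.card) := by
    calc (‖∑ b ∈ B, T b‖) ^ 2 ≤ (∑ b ∈ B, ‖T b‖) ^ 2 :=
          pow_le_pow_left₀ (norm_nonneg _) habs 2
      _ ≤ B.card * ∑ b ∈ B, ‖T b‖ ^ 2 := hCS
      _ ≤ B.card * (2 * q * A.card) :=
          mul_le_mul_of_nonneg_left hsq (Nat.cast_nonneg _)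
      _ ≤ 4 * ((q : ℝ) * A.card * B.card) := by nlinarith
  calc ‖∑ b ∈ B, T b‖
      = Real.sqrt ((‖∑ b ∈ B, T b‖) ^ 2) :=
        (Real.sqrt_sq (norm_nonneg _)).symm
    _ ≤ Real.sqrt (4 * ((q : ℝ) * A.card * B.card)) := Real.sqrt_le_sqrt key
    _ = 2 * Real.sqrt ((q : ℝ) * A.card * B.card) := by
        rw [Real.sqrt_mul (by norm_num : (0:ℝ) ≤ 4),
          show (4 : ℝ) = 2 ^ 2 by norm_num, Real.sqrt_sq (by norm_num : (0:ℝ) ≤ 2)]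
end main
end

section
/- Let F be a finite field of odd order q, let χ be the quadratic character, and let D, r ∈ F be nonzero. If A ⊆ F satisfies |A| ≥ 2√q + 1, then ∑_{a,b ∈ A} (1 + χ(D·a² + 4·r·b)) > 0; in particular there exist a, b ∈ A with D·a² + 4·r·b a square (possibly zero) in F. -/
open Finset

section Aux

variable {F : Type} [Field F] [Fintype F] [DecidableEq F]

/-- Shifted product character sum: `∑ x, χ(x) χ(x+d) = -1` for `d ≠ 0`. -/
lemma aux_sum_shift (hF : ringChar F ≠ 2) {d : F} (hd : d ≠ 0) :
    ∑ x : F, quadraticChar F x * quadraticChar F (x + d) = -1 := by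
  have h0 : ∑ x : F, quadraticChar F x * quadraticChar F (x + d)
      = ∑ x ∈ (univ : Finset F).erase 0, quadraticChar F x * quadraticChar F (x + d) := by
    rw [← Finset.add_sum_erase _ _ (mem_univ (0 : F))]
    simp
  rw [h0]
  have h1 : ∑ x ∈ (univ : Finset F).erase 0, quadraticChar F x * quadraticChar F (x + d)
      = ∑ y ∈ (univ : Finset F).erase 1, quadraticChar F y := by
    refine Finset.sum_bij' (fun x _ => 1 + d * x⁻¹) (fun y _ => d * (y - 1)⁻¹) ?_ ?_ ?_ ?_ ?_
    · intro a ha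
      have ha0 : a ≠ 0 := by simpa using (Finset.mem_erase.mp ha).1
      simp only [Finset.mem_erase, Finset.mem_univ, and_true]
      intro h
      have : d * a⁻¹ = 0 := by linear_combination h
      exact hd (by simpa [inv_eq_zero, ha0] using mul_eq_zero.mp this)
    · intro y hy
      have hy1 : y ≠ 1 := by simpa using (Finset.mem_erase.mp hy).1
      simp only [Finset.mem_erase, Finset.mem_univ, and_true]
      have : y - 1 ≠ 0 := sub_ne_zero.mpr hy1
      exact mul_ne_zero hd (inv_ne_zero this)
    · intro a ha
      have ha0 : a ≠ 0 := by simpa using (Finset.mem_erase.mp ha).1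
      field_simp
      simp [hd]
    · intro y hy
      have hy1 : y ≠ 1 := by simpa using (Finset.mem_erase.mp hy).1
      have : y - 1 ≠ 0 := sub_ne_zero.mpr hy1
      field_simp
      ring
    · intro a ha
      have ha0 : a ≠ 0 := by simpa using (Finset.mem_erase.mp ha).1
      have hxd : a + d = a * (1 + d * a⁻¹) := by field_simp
      rw [hxd, map_mul, ← mul_assoc, ← sq, quadraticChar_sq_one ha0, one_mul]
  rw [h1]
  have h2 := quadraticChar_sum_zero hF
  rw [← Finset.add_sum_erase _ _ (mem_univ (1 : F))] at h2
  have h3 : quadraticChar F (1 : F) = 1 := by simp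
  omega

/-- `∑ x, χ(x+c)² = q - 1`. -/
lemma aux_sum_sq (hF : ringChar F ≠ 2) (c : F) :
    ∑ x : F, quadraticChar F (x + c) ^ 2 = (Fintype.card F : ℤ) - 1 := by
  have h0 : ∑ x : F, quadraticChar F (x + c) ^ 2 = ∑ y : F, quadraticChar F y ^ 2 :=
    Equiv.sum_comp (Equiv.addRight c) (fun y => quadraticChar F y ^ 2)
  rw [h0]
  have h1 : ∀ y : F, quadraticChar F y ^ 2 = 1 - (if y = 0 then 1 else 0 : ℤ) := by
    intro y
    by_cases hy : y = 0
    · simp [hy]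
    · rw [quadraticChar_sq_one hy]; simp [hy]
  rw [Finset.sum_congr rfl fun y _ => h1 y, Finset.sum_sub_distrib]
  simp [Finset.card_univ]

/-- Inner sum: `∑ x, χ(x+u) χ(x+u') = -1` for `u ≠ u'`. -/
lemma aux_sum_shift' (hF : ringChar F ≠ 2) {u u' : F} (h : u ≠ u') :
    ∑ x : F, quadraticChar F (x + u) * quadraticChar F (x + u') = -1 := by
  have hd : u' - u ≠ 0 := sub_ne_zero.mpr (Ne.symm h)
  have h0 : ∑ x : F, quadraticChar F (x + u) * quadraticChar F (x + u')
      = ∑ y : F, quadraticChar F y * quadraticChar F (y + (u' - u)) := by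
    rw [← Equiv.sum_comp (Equiv.addRight u)
      (fun y => quadraticChar F y * quadraticChar F (y + (u' - u)))]
    apply Finset.sum_congr rfl
    intro x _
    simp only [Equiv.coe_addRight]
    have hxu : x + u + (u' - u) = x + u' := by ring
    rw [hxu]
  rw [h0]
  exact aux_sum_shift hF hd

/-- Fibers of `a ↦ D a²` have at most 2 elements. -/
lemma aux_fiber_card (hF : ringChar F ≠ 2) {D : F} (hD : D ≠ 0) (x : F) :
    ((univ : Finset F).filter fun a => D * a ^ 2 = x).card ≤ 2 := by
  have hset : ((univ : Finset F).filter fun a => D * a ^ 2 = x)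
      = {z : F | z ^ 2 = D⁻¹ * x}.toFinset := by
    ext a
    simp only [Finset.mem_filter, Finset.mem_univ, true_and, Set.mem_toFinset, Set.mem_setOf_eq]
    constructor
    · intro h; field_simp [← h]
      linear_combination h
    · intro h; rw [h, mul_inv_cancel_left₀ hD]
  rw [hset]
  have h1 := quadraticChar_card_sqrts hF (D⁻¹ * x)
  have h2 : quadraticChar F (D⁻¹ * x) ≤ 1 := by
    rcases quadraticChar_isQuadratic F (D⁻¹ * x) with h | h | h <;> rw [h] <;> norm_num
  omega

end Aux

theorem stmt_7 (F : Type) [Field F] [Fintype F] [DecidableEq F]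
    (hq : Odd (Fintype.card F)) (D r : F) (hD : D ≠ 0) (hr : r ≠ 0)
    (A : Finset F) (hA : 2 * Real.sqrt (Fintype.card F) + 1 ≤ A.card) :
    (0 < ∑ a ∈ A, ∑ b ∈ A, (1 + quadraticChar F (D * a ^ 2 + 4 * r * b))) ∧
      ∃ a ∈ A, ∃ b ∈ A, IsSquare (D * a ^ 2 + 4 * r * b) := by
  have hF : ringChar F ≠ 2 := by
    intro h
    have := FiniteField.even_card_of_char_two h
    rw [Nat.odd_iff] at hq
    omega
  have h2F : (2 : F) ≠ 0 := Ring.two_ne_zero hF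
  have h4r : (4 : F) * r ≠ 0 := by
    have h4 : (4 : F) ≠ 0 := by
      intro h
      exact h2F (by apply mul_self_eq_zero.mp; linear_combination h)
    exact mul_ne_zero h4 hr
  set q : ℤ := (Fintype.card F : ℤ) with hqdef
  set N : ℤ := (A.card : ℤ) with hNdef
  -- The inner sum for fixed first argument value x
  set J : F → ℤ := fun x => ∑ b ∈ A, quadraticChar F (x + 4 * r * b) with hJ
  -- Total character sum
  set S : ℤ := ∑ a ∈ A, J (D * a ^ 2) with hS
  -- Step 1: ∑_x (J x)^2 = N * (q - N)
  have step1 : ∑ x : F, (J x) ^ 2 = N * (q - N) := by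
    have expand : ∑ x : F, (J x) ^ 2
        = ∑ b ∈ A, ∑ b' ∈ A, ∑ x : F,
            quadraticChar F (x + 4 * r * b) * quadraticChar F (x + 4 * r * b') := by
      simp only [hJ, sq, Finset.sum_mul_sum]
      rw [Finset.sum_comm]
      apply Finset.sum_congr rfl
      intro b _
      rw [Finset.sum_comm]
    rw [expand]
    have inner : ∀ b ∈ A, ∀ b' ∈ A, ∑ x : F,
        quadraticChar F (x + 4 * r * b) * quadraticChar F (x + 4 * r * b')
        = if b = b' then q - 1 else -1 := by
      intro b _ b' _
      by_cases hbb : b = b'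
      · subst hbb
        simp only [if_pos rfl]
        rw [← aux_sum_sq hF (4 * r * b)]
        apply Finset.sum_congr rfl
        intro x _
        ring
      · rw [if_neg hbb]
        apply aux_sum_shift' hF
        intro hcon
        exact hbb (mul_left_cancel₀ h4r hcon)
    calc ∑ b ∈ A, ∑ b' ∈ A, ∑ x : F,
          quadraticChar F (x + 4 * r * b) * quadraticChar F (x + 4 * r * b')
        = ∑ b ∈ A, ∑ b' ∈ A, (if b = b' then q - 1 else -1) := by
          apply Finset.sum_congr rfl
          intro b hb
          apply Finset.sum_congr rfl
          intro b' hb'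
          exact inner b hb b' hb'
      _ = ∑ b ∈ A, (q - N) := by
          apply Finset.sum_congr rfl
          intro b hb
          have : ∀ b' : F, (if b = b' then q - 1 else -1 : ℤ)
              = -1 + (if b = b' then q else 0) := by
            intro b'; by_cases h : b = b' <;> simp [h] <;> ring
          rw [Finset.sum_congr rfl fun b' _ => this b', Finset.sum_add_distrib]
          rw [Finset.sum_ite_eq A b (fun _ => q), if_pos hb]
          simp [hNdef]
          ring
      _ = N * (q - N) := by rw [Finset.sum_const, nsmul_eq_mul]
  -- Step 2: ∑_{a ∈ A} (J (D a²))² ≤ 2 * ∑_x (J x)²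
  have step2 : ∑ a ∈ A, (J (D * a ^ 2)) ^ 2 ≤ 2 * ∑ x : F, (J x) ^ 2 := by
    have hsub : ∑ a ∈ A, (J (D * a ^ 2)) ^ 2 ≤ ∑ a : F, (J (D * a ^ 2)) ^ 2 :=
      Finset.sum_le_sum_of_subset_of_nonneg (Finset.subset_univ A)
        (fun i _ _ => sq_nonneg _)
    refine hsub.trans ?_
    rw [Finset.sum_comp (fun x => (J x) ^ 2) (fun a : F => D * a ^ 2)]
    calc ∑ x ∈ (univ : Finset F).image (fun a : F => D * a ^ 2),
          ((univ : Finset F).filter fun a => D * a ^ 2 = x).card • (J x) ^ 2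
        ≤ ∑ x ∈ (univ : Finset F).image (fun a : F => D * a ^ 2), 2 * (J x) ^ 2 := by
          apply Finset.sum_le_sum
          intro x _
          rw [nsmul_eq_mul]
          have hc := aux_fiber_card hF hD x
          have : (((univ : Finset F).filter fun a => D * a ^ 2 = x).card : ℤ) ≤ 2 := by
            exact_mod_cast hc
          nlinarith [sq_nonneg (J x)]
      _ ≤ ∑ x : F, 2 * (J x) ^ 2 := by
          apply Finset.sum_le_sum_of_subset_of_nonneg (Finset.subset_univ _)
          intro x _ _
          nlinarith [sq_nonneg (J x)]
      _ = 2 * ∑ x : F, (J x) ^ 2 := by rw [Finset.mul_sum]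
  -- Step 3: Cauchy–Schwarz
  have step3 : S ^ 2 ≤ N * ∑ a ∈ A, (J (D * a ^ 2)) ^ 2 := by
    have := Finset.sum_mul_sq_le_sq_mul_sq A (fun _ => (1 : ℤ)) (fun a => J (D * a ^ 2))
    simpa [hS, hNdef] using this
  -- Combine: S² ≤ 2 N² q
  have hNq : N * (q - N) ≤ N * q := by
    have hN0 : 0 ≤ N := Int.natCast_nonneg _
    nlinarith [sq_nonneg N]
  have hbound : S ^ 2 ≤ 2 * N ^ 2 * q := by
    have h1 : ∑ a ∈ A, (J (D * a ^ 2)) ^ 2 ≤ 2 * (N * q) := by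
      calc ∑ a ∈ A, (J (D * a ^ 2)) ^ 2 ≤ 2 * ∑ x : F, (J x) ^ 2 := step2
        _ = 2 * (N * (q - N)) := by rw [step1]
        _ ≤ 2 * (N * q) := by linarith
    have hN0 : 0 ≤ N := Int.natCast_nonneg _
    calc S ^ 2 ≤ N * ∑ a ∈ A, (J (D * a ^ 2)) ^ 2 := step3
      _ ≤ N * (2 * (N * q)) := by
          apply mul_le_mul_of_nonneg_left h1 hN0
      _ = 2 * N ^ 2 * q := by ring
  -- Main positivity in ℤ
  have hmain : 0 < ∑ a ∈ A, ∑ b ∈ A, (1 + quadraticChar F (D * a ^ 2 + 4 * r * b)) := by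
    have hsplit : ∑ a ∈ A, ∑ b ∈ A, (1 + quadraticChar F (D * a ^ 2 + 4 * r * b))
        = N ^ 2 + S := by
      simp only [Finset.sum_add_distrib, Finset.sum_const, nsmul_eq_mul, mul_one, hS, hJ]
      push_cast
      ring
    rw [hsplit]
    -- now the real-number argument
    have hq0 : (0 : ℝ) ≤ (Fintype.card F : ℝ) := Nat.cast_nonneg _
    have hsq : Real.sqrt (Fintype.card F) ^ 2 = (Fintype.card F : ℝ) := Real.sq_sqrt hq0
    have hs0 : (0 : ℝ) ≤ Real.sqrt (Fintype.card F) := Real.sqrt_nonneg _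
    have hboundR : (S : ℝ) ^ 2 ≤ 2 * (N : ℝ) ^ 2 * (q : ℝ) := by exact_mod_cast hbound
    have hAR : 2 * Real.sqrt (Fintype.card F) + 1 ≤ (N : ℝ) := by
      rw [hNdef]; push_cast; exact hA
    have hqR : (q : ℝ) = Real.sqrt (Fintype.card F) ^ 2 := by
      rw [hsq, hqdef]; push_cast; ring
    have : (0 : ℝ) < (N : ℝ) ^ 2 + (S : ℝ) := by
      by_contra hcon
      push_neg at hcon
      set t : ℝ := Real.sqrt (Fintype.card F) with ht
      set n : ℝ := (N : ℝ) with hn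
      set s : ℝ := (S : ℝ) with hsR
      have hb2 : s ^ 2 ≤ 2 * n ^ 2 * t ^ 2 := by
        calc s ^ 2 ≤ 2 * n ^ 2 * (q : ℝ) := hboundR
          _ = 2 * n ^ 2 * t ^ 2 := by rw [hqR]
      have hs_le : s ≤ -n ^ 2 := by nlinarith
      have hn1 : 1 ≤ n := by nlinarith
      have h1 : n ^ 4 ≤ s ^ 2 := by nlinarith [sq_nonneg n]
      have hn2 : (2 * t + 1) ^ 2 ≤ n ^ 2 := by nlinarith
      have h2 : n ^ 2 * (2 * t ^ 2 + 4 * t + 1) ≤ 0 := by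
        nlinarith [mul_le_mul_of_nonneg_left hn2 (sq_nonneg n)]
      nlinarith [sq_nonneg t]
    exact_mod_cast this
  refine ⟨hmain, ?_⟩
  by_contra hcon
  push_neg at hcon
  have hz : ∀ a ∈ A, ∀ b ∈ A, (1 + quadraticChar F (D * a ^ 2 + 4 * r * b) : ℤ) = 0 := by
    intro a ha b hb
    have := hcon a ha b hb
    have := quadraticChar_neg_one_iff_not_isSquare.mpr this
    omega
  have : ∑ a ∈ A, ∑ b ∈ A, (1 + quadraticChar F (D * a ^ 2 + 4 * r * b)) = 0 := by
    apply Finset.sum_eq_zero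
    intro a ha
    exact Finset.sum_eq_zero fun b hb => hz a ha b hb
  omega
end

section
/- Let F be a finite field of odd order q. Let L be a binary linear form over F and Q a binary quadratic form over F with L not dividing Q and disc(Q) ≠ 0. Then for every subset A ⊆ F with |A| ≥ 2√q + 1, there exist x, y ∈ F with L(x,y) ∈ A and Q(x,y) ∈ A. -/
open MvPolynomial

section Helpers

open Finset


variable {F : Type} [Field F] [Fintype F] [DecidableEq F]

lemma jacobi_shift (hF : ringChar F ≠ 2) {d : F} (hd : d ≠ 0) :
    ∑ w : F, quadraticChar F w * quadraticChar F (w + d) = -1 := by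
  classical
  have h0 : ∑ w ∈ (univ : Finset F) \ {0}, quadraticChar F w * quadraticChar F (w + d)
      = ∑ w : F, quadraticChar F w * quadraticChar F (w + d) := by
    rw [Finset.sum_sdiff_eq_sub (by simp)]
    simp
  rw [← h0]
  have key : ∀ w ∈ (univ : Finset F) \ {0},
      quadraticChar F w * quadraticChar F (w + d) = quadraticChar F (1 + d * w⁻¹) := by
    intro w hw
    simp only [mem_sdiff, mem_singleton] at hw
    have hw0 : w ≠ 0 := hw.2
    rw [← map_mul]
    have : w * (w + d) = w^2 * (1 + d * w⁻¹) := by field_simp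
    rw [this, map_mul, quadraticChar_sq_one' hw0, one_mul]
  rw [Finset.sum_congr rfl key]
  have hbij : ∑ w ∈ (univ : Finset F) \ {0}, quadraticChar F (1 + d * w⁻¹)
      = ∑ z ∈ (univ : Finset F) \ {1}, quadraticChar F z := by
    apply Finset.sum_nbij' (fun w => 1 + d * w⁻¹) (fun z => d * (z - 1)⁻¹)
    · intro w hw
      simp only [mem_sdiff, mem_singleton, mem_univ, true_and] at hw ⊢
      intro h
      have : d * w⁻¹ = 0 := by linear_combination h
      exact hd (by
        rcases mul_eq_zero.mp this with h1 | h1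
        · exact h1
        · exact absurd (inv_eq_zero.mp h1) hw)
    · intro z hz
      simp only [mem_sdiff, mem_singleton, mem_univ, true_and] at hz ⊢
      intro h
      rcases mul_eq_zero.mp h with h1 | h1
      · exact hd h1
      · exact hz (by
          have h2 := inv_eq_zero.mp h1
          linear_combination h2)
    · intro w hw
      simp only [mem_sdiff, mem_singleton, mem_univ, true_and] at hw
      field_simp
      simp [hd]
    · intro z hz
      simp only [mem_sdiff, mem_singleton, mem_univ, true_and] at hz
      have : z - 1 ≠ 0 := sub_ne_zero.mpr hz
      field_simp
      ring
    · intro w hw; rfl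
  rw [hbij]
  rw [Finset.sum_sdiff_eq_sub (by simp)]
  rw [quadraticChar_sum_zero hF]
  simp

lemma pair_sum (hF : ringChar F ≠ 2) {c : F} (hc : c ≠ 0) (u v : F) :
    ∑ t : F, quadraticChar F (u + c * t) * quadraticChar F (v + c * t)
      = if u = v then (Fintype.card F - 1 : ℤ) else -1 := by
  classical
  have hre : ∑ t : F, quadraticChar F (u + c * t) * quadraticChar F (v + c * t)
      = ∑ w : F, quadraticChar F w * quadraticChar F (w + (v - u)) := by
    apply Fintype.sum_bijective (fun t => u + c * t)
    · constructor
      · intro a b hab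
        simp only at hab
        have : c * a = c * b := by linear_combination hab
        exact mul_left_cancel₀ hc this
      · intro w
        exact ⟨(w - u) / c, by field_simp; ring⟩
    · intro t
      congr 1
      ring
  rw [hre]
  by_cases huv : u = v
  · subst huv
    simp only [sub_self, add_zero, if_true, ← sq]
    have hsq : ∀ w : F, (quadraticChar F w)^2 = if w = 0 then (0:ℤ) else 1 := by
      intro w
      by_cases hw : w = 0
      · rw [if_pos hw, hw]; simp
      · rw [if_neg hw, quadraticChar_sq_one hw]
    rw [Finset.sum_congr rfl fun w _ => hsq w]
    rw [Finset.sum_ite, Finset.sum_const, Finset.sum_const]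
    rw [Finset.filter_ne']
    have h1 : (1:ℕ) ≤ Fintype.card F := Fintype.card_pos
    simp [Finset.card_erase_of_mem, Finset.card_univ, Nat.cast_sub h1]
  · rw [if_neg huv]
    exact jacobi_shift hF (sub_ne_zero.mpr (Ne.symm huv))

lemma key_lemma (hF : ringChar F ≠ 2) {c d : F} (hc : c ≠ 0) (hd : d ≠ 0)
    (A : Finset F) (hA : 2 * Real.sqrt (Fintype.card F) + 1 ≤ A.card) :
    ∃ s ∈ A, ∃ t ∈ A, IsSquare (d * s ^ 2 + c * t) := by
  classical
  by_contra hcon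
  push_neg at hcon
  set q := Fintype.card F with hqdef
  have hq1 : (1 : ℕ) ≤ q := Fintype.card_pos
  have hsq1 : (1 : ℝ) ≤ Real.sqrt q := by
    rw [show (1:ℝ) = Real.sqrt 1 by simp]
    exact Real.sqrt_le_sqrt (by exact_mod_cast hq1)
  have hA3 : (3 : ℝ) ≤ A.card := by nlinarith
  have hApos : 0 < A.card := by
    rcases Nat.eq_zero_or_pos A.card with h | h
    · rw [h] at hA3; norm_num at hA3
    · exact h
  set χ := quadraticChar F with hχdef
  have hval : ∀ s ∈ A, ∀ t ∈ A, χ (d * s ^ 2 + c * t) = -1 := fun s hs t ht =>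
    quadraticChar_neg_one_iff_not_isSquare.mpr (hcon s hs t ht)
  set g : F → ℤ := fun t => ∑ s ∈ A, χ (d * s ^ 2 + c * t) with hgdef
  have hS : ∑ t ∈ A, g t = -(A.card : ℤ)^2 := by
    have : ∀ t ∈ A, g t = -(A.card : ℤ) := by
      intro t ht
      rw [hgdef]
      simp only
      rw [Finset.sum_congr rfl (fun s hs => hval s hs t ht)]
      simp
    rw [Finset.sum_congr rfl this]
    simp [sq]
  -- Cauchy-Schwarz
  have CS : ((A.card : ℤ)^2)^2 ≤ (A.card : ℤ) * ∑ t ∈ A, (g t)^2 := by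
    have h := Finset.sum_mul_sq_le_sq_mul_sq A (fun _ => (1:ℤ)) g
    simp only [one_mul, one_pow] at h
    rw [hS] at h
    simpa using h
  have ext : ∑ t ∈ A, (g t)^2 ≤ ∑ t : F, (g t)^2 :=
    Finset.sum_le_sum_of_subset_of_nonneg (Finset.subset_univ A)
      (fun t _ _ => sq_nonneg _)
  -- expand the full sum
  have expand : ∑ t : F, (g t)^2
      = ∑ s ∈ A, ∑ s' ∈ A, ∑ t : F, χ (d * s ^ 2 + c * t) * χ (d * s' ^ 2 + c * t) := by
    simp only [hgdef, sq, Finset.sum_mul_sum]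
    rw [Finset.sum_comm]
    congr 1
    ext s
    rw [Finset.sum_comm]
  have eval : ∀ s ∈ A, ∀ s' ∈ A,
      ∑ t : F, χ (d * s ^ 2 + c * t) * χ (d * s' ^ 2 + c * t)
        = if d * s ^ 2 = d * s' ^ 2 then (q - 1 : ℤ) else -1 := by
    intro s _ s' _
    exact pair_sum hF hc _ _
  have hT : ∑ t : F, (g t)^2 ≤ 2 * (A.card : ℤ) * (q - 1) := by
    rw [expand]
    have step1 : ∀ s ∈ A, ∑ s' ∈ A, ∑ t : F, χ (d * s ^ 2 + c * t) * χ (d * s' ^ 2 + c * t)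
        ≤ 2 * (q - 1 : ℤ) := by
      intro s hs
      rw [Finset.sum_congr rfl (fun s' hs' => eval s hs s' hs')]
      have hb : ∀ s' ∈ A, (if d * s ^ 2 = d * s' ^ 2 then (q - 1 : ℤ) else -1)
          ≤ (if d * s ^ 2 = d * s' ^ 2 then (q - 1 : ℤ) else 0) := by
        intro s' _
        by_cases h : d * s ^ 2 = d * s' ^ 2 <;> simp [h]
      calc ∑ s' ∈ A, (if d * s ^ 2 = d * s' ^ 2 then (q - 1 : ℤ) else -1)
          ≤ ∑ s' ∈ A, (if d * s ^ 2 = d * s' ^ 2 then (q - 1 : ℤ) else 0) :=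
            Finset.sum_le_sum hb
        _ = (A.filter (fun s' => d * s ^ 2 = d * s' ^ 2)).card * (q - 1 : ℤ) := by
            rw [Finset.sum_ite, Finset.sum_const, Finset.sum_const]
            simp [mul_comm]
        _ ≤ 2 * (q - 1 : ℤ) := by
            have hsub : A.filter (fun s' => d * s ^ 2 = d * s' ^ 2) ⊆ {s, -s} := by
              intro s' hs'
              simp only [Finset.mem_filter] at hs'
              have h2 : s' ^ 2 = s ^ 2 := by
                have := mul_left_cancel₀ hd hs'.2
                exact this.symm
              rcases sq_eq_sq_iff_eq_or_eq_neg.mp h2 with h | h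
              · simp [h]
              · simp [h]
            have hcard : (A.filter (fun s' => d * s ^ 2 = d * s' ^ 2)).card ≤ 2 :=
              le_trans (Finset.card_le_card hsub) (Finset.card_insert_le _ _ |>.trans (by simp))
            have hq0 : (0 : ℤ) ≤ (q : ℤ) - 1 := by
              have : (1:ℤ) ≤ (q:ℤ) := by exact_mod_cast hq1
              linarith
            have : ((A.filter (fun s' => d * s ^ 2 = d * s' ^ 2)).card : ℤ) ≤ 2 := by
              exact_mod_cast hcard
            nlinarith
    calc ∑ s ∈ A, ∑ s' ∈ A, ∑ t : F, χ (d * s ^ 2 + c * t) * χ (d * s' ^ 2 + c * t)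
        ≤ ∑ s ∈ A, 2 * (q - 1 : ℤ) := Finset.sum_le_sum step1
      _ = 2 * (A.card : ℤ) * (q - 1) := by rw [Finset.sum_const]; ring_nf
  -- combine
  have hfinal : ((A.card : ℤ)^2)^2 ≤ (A.card : ℤ) * (2 * (A.card : ℤ) * (q - 1)) :=
    le_trans CS (by
      have := le_trans ext hT
      exact mul_le_mul_of_nonneg_left this (by positivity))
  have hcard2 : ((A.card : ℤ))^2 ≤ 2 * (q - 1) := by
    have hpos : (0 : ℤ) < (A.card : ℤ)^2 := by positivity
    nlinarith
  -- contradiction with hA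
  have hreal : ((A.card : ℝ))^2 ≤ 2 * ((q : ℝ) - 1) := by exact_mod_cast hcard2
  have hsqq : Real.sqrt q ^ 2 = q := Real.sq_sqrt (by positivity)
  nlinarith [Real.sqrt_nonneg (q : ℝ), hA, hreal, hsqq]

end Helpers

theorem stmt_8 (F : Type) [Field F] [Fintype F] (hq : Odd (Fintype.card F))
    (a₁ a₂ b₁ b₂ b₃ : F) (hL : a₁ ≠ 0 ∨ a₂ ≠ 0)
    (hdvd : ¬ ((C a₁ * X 0 + C a₂ * X 1 : MvPolynomial (Fin 2) F) ∣
        (C b₁ * X 0 ^ 2 + C b₂ * X 0 * X 1 + C b₃ * X 1 ^ 2)))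
    (hdisc : b₂ ^ 2 - 4 * b₁ * b₃ ≠ 0)
    (A : Finset F) (hA : 2 * Real.sqrt (Fintype.card F) + 1 ≤ A.card) :
    ∃ x y : F, a₁ * x + a₂ * y ∈ A ∧
      b₁ * x ^ 2 + b₂ * x * y + b₃ * y ^ 2 ∈ A := by
  classical
  have hF2 : ringChar F ≠ 2 := by
    intro h
    have h1 := FiniteField.even_card_iff_char_two.mp h
    rw [Nat.odd_iff] at hq
    omega
  have h2F : (2 : F) ≠ 0 := Ring.two_ne_zero hF2
  by_cases ha₂ : a₂ = 0
  · -- case a₂ = 0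
    have ha₁ : a₁ ≠ 0 := hL.resolve_right (by simp [ha₂])
    have hb₃ : b₃ ≠ 0 := by
      intro h0
      apply hdvd
      set m := b₁ / a₁ with hm
      set n := b₂ / a₁ with hn
      have e1 : a₁ * m = b₁ := by rw [hm]; field_simp
      have e2 : a₁ * n + a₂ * m = b₂ := by rw [hn, ha₂]; field_simp; ring
      have e3 : a₂ * n = b₃ := by rw [ha₂, h0]; ring
      exact ⟨C m * X 0 + C n * X 1, by
        rw [← e1, ← e2, ← e3]
        simp only [map_mul, map_add]
        ring⟩
    have hc : (4 : F) * b₃ * a₁ ^ 2 ≠ 0 := by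
      have h4 : (4 : F) ≠ 0 := by
        have : (4 : F) = 2 * 2 := by norm_num
        rw [this]; exact mul_ne_zero h2F h2F
      exact mul_ne_zero (mul_ne_zero h4 hb₃) (pow_ne_zero _ ha₁)
    obtain ⟨s, hs, t, ht, r, hr⟩ :=
      key_lemma (F := F) hF2 hc hdisc A hA
    -- hr : (b₂^2 - 4*b₁*b₃) * s^2 + (4*b₃*a₁^2) * t = r * r
    refine ⟨s / a₁, (r - b₂ * s) / (2 * b₃ * a₁), ?_, ?_⟩
    · have : a₁ * (s / a₁) + a₂ * ((r - b₂ * s) / (2 * b₃ * a₁)) = s := by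
        rw [ha₂]; field_simp; ring
      rwa [this]
    · set x := s / a₁ with hx
      set y := (r - b₂ * s) / (2 * b₃ * a₁) with hy
      have hxr : a₁ * x = s := by rw [hx]; field_simp
      have hyr : 2 * b₃ * a₁ * y = r - b₂ * s := by
        rw [hy]; field_simp
      have hQ : b₁ * x ^ 2 + b₂ * x * y + b₃ * y ^ 2 = t := by
        have hmul : (4 * b₃ * a₁ ^ 2) * (b₁ * x ^ 2 + b₂ * x * y + b₃ * y ^ 2)
            = (4 * b₃ * a₁ ^ 2) * t := by
          linear_combination (4 * b₁ * b₃ * (a₁ * x + s) + 2 * b₂ * (2 * b₃ * a₁ * y)) * hxr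
            + (2 * b₃ * a₁ * y + b₂ * s + r) * hyr - hr
        exact mul_left_cancel₀ hc hmul
      rwa [hQ]
  · -- case a₂ ≠ 0
    set α := b₁ * a₂ ^ 2 - b₂ * a₁ * a₂ + b₃ * a₁ ^ 2 with hα
    have hαne : α ≠ 0 := by
      intro h0
      apply hdvd
      set m := (b₂ * a₂ - a₁ * b₃) / a₂ ^ 2 with hm
      set n := b₃ / a₂ with hn
      have e1 : a₁ * m = b₁ := by
        rw [hm]; field_simp; linear_combination -h0
      have e2 : a₁ * n + a₂ * m = b₂ := by
        rw [hm, hn]; field_simp; ring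
      have e3 : a₂ * n = b₃ := by rw [hn]; field_simp
      exact ⟨C m * X 0 + C n * X 1, by
        rw [← e1, ← e2, ← e3]
        simp only [map_mul, map_add]
        ring⟩
    have h4 : (4 : F) ≠ 0 := by
      have : (4 : F) = 2 * 2 := by norm_num
      rw [this]; exact mul_ne_zero h2F h2F
    have hd : a₂ ^ 2 * (b₂ ^ 2 - 4 * b₁ * b₃) ≠ 0 :=
      mul_ne_zero (pow_ne_zero _ ha₂) hdisc
    have hc : (4 : F) * α * a₂ ^ 2 ≠ 0 :=
      mul_ne_zero (mul_ne_zero h4 hαne) (pow_ne_zero _ ha₂)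
    obtain ⟨s, hs, t, ht, r, hr⟩ :=
      key_lemma (F := F) hF2 hc hd A hA
    -- hr : (a₂^2*(b₂^2-4*b₁*b₃)) * s^2 + (4*α*a₂^2) * t = r * r
    set x := (r - s * (b₂ * a₂ - 2 * a₁ * b₃)) / (2 * α) with hx
    set y := (s - a₁ * x) / a₂ with hy
    have hxr : 2 * α * x = r - s * (b₂ * a₂ - 2 * a₁ * b₃) := by
      rw [hx]; field_simp
    have hyr : a₂ * y = s - a₁ * x := by rw [hy]; field_simp
    refine ⟨x, y, ?_, ?_⟩
    · have : a₁ * x + a₂ * y = s := by rw [hyr]; ring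
      rwa [this]
    · have hQ : b₁ * x ^ 2 + b₂ * x * y + b₃ * y ^ 2 = t := by
        have hmul : (4 * α * a₂ ^ 2) * (b₁ * x ^ 2 + b₂ * x * y + b₃ * y ^ 2)
            = (4 * α * a₂ ^ 2) * t := by
          have expand : a₂ ^ 2 * (b₁ * x ^ 2 + b₂ * x * y + b₃ * y ^ 2)
              = α * x ^ 2 + s * (b₂ * a₂ - 2 * a₁ * b₃) * x + b₃ * s ^ 2 := by
            linear_combination (b₂ * a₂ * x + b₃ * (a₂ * y + s - a₁ * x)) * hyr
          have quad : 4 * α * (α * x ^ 2 + s * (b₂ * a₂ - 2 * a₁ * b₃) * x + b₃ * s ^ 2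
              - a₂ ^ 2 * t) = 0 := by
            linear_combination (2 * α * x + s * (b₂ * a₂ - 2 * a₁ * b₃) + r) * hxr - hr
          linear_combination 4 * α * expand + quad
        exact mul_left_cancel₀ hc hmul
      rwa [hQ]
end

section
/- Let F be a finite field of odd order q, let L be a binary linear form and Q a binary quadratic form over F such that L does not divide Q but disc(Q) = 0. Then there exists a subset A ⊆ F with |A| ≥ (q-1)/2 such that no pair (x,y) ∈ F² satisfies both L(x,y) ∈ A and Q(x,y) ∈ A. -/
open MvPolynomial

lemma stmt9_char (F : Type) [Field F] [Fintype F] (hq : Odd (Fintype.card F)) :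
    ringChar F ≠ 2 := by
  intro h
  have h2 := FiniteField.even_card_of_char_two (F := F) h
  rw [Nat.odd_iff] at hq
  omega

lemma stmt9_count (F : Type) [Field F] [Fintype F] (hq : Odd (Fintype.card F)) :
    (Fintype.card F - 1) / 2 ≤ {x : F | ¬ IsSquare x}.ncard := by
  classical
  have hchar := stmt9_char F hq
  obtain ⟨n, hn⟩ := FiniteField.exists_nonsquare hchar
  have hn0 : n ≠ 0 := fun h => hn (h ▸ ⟨0, by ring⟩)
  set S : Set F := {x : F | ¬ IsSquare x}
  set T : Set F := {x : F | x ≠ 0 ∧ IsSquare x}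
  have hinj : Set.InjOn (fun x => n * x) T := fun a _ b _ h => by
    exact mul_left_cancel₀ hn0 h
  have himg : (fun x => n * x) '' T ⊆ S := by
    rintro _ ⟨x, ⟨hx0, s, hs⟩, rfl⟩
    rintro ⟨t, ht⟩
    apply hn
    have hs0 : s ≠ 0 := fun h => hx0 (by rw [hs, h, mul_zero])
    refine ⟨t / s, ?_⟩
    field_simp
    linear_combination ht - n * hs
  have hT : T.ncard ≤ S.ncard := by
    calc T.ncard = ((fun x => n * x) '' T).ncard := (Set.ncard_image_of_injOn hinj).symm
    _ ≤ S.ncard := Set.ncard_le_ncard himg (Set.toFinite S)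
  have hunion : S ∪ T = {x : F | x ≠ 0} := by
    ext x
    simp only [S, T, Set.mem_union, Set.mem_setOf_eq]
    constructor
    · rintro (h | h)
      · exact fun h0 => h (h0 ▸ ⟨0, by ring⟩)
      · exact h.1
    · intro h
      by_cases hx : IsSquare x
      · exact Or.inr ⟨h, hx⟩
      · exact Or.inl hx
  have hdisj : Disjoint S T := by
    rw [Set.disjoint_left]
    rintro x hx ⟨_, hsq⟩
    exact hx hsq
  have hcard : S.ncard + T.ncard = Fintype.card F - 1 := by
    rw [← Set.ncard_union_eq hdisj (Set.toFinite S) (Set.toFinite T), hunion]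
    have : {x : F | x ≠ 0} = ({0} : Set F)ᶜ := by ext x; simp
    rw [this, Set.ncard_eq_toFinset_card', Set.toFinset_compl, Set.toFinset_singleton,
      Finset.card_compl, Finset.card_singleton]
  omega

lemma stmt9_sq (F : Type) [Field F] [Fintype F] (hq : Odd (Fintype.card F))
    (a₁ a₂ b₁ b₂ b₃ : F) (hL : a₁ ≠ 0 ∨ a₂ ≠ 0)
    (hdvd : ¬ ((C a₁ * X 0 + C a₂ * X 1 : MvPolynomial (Fin 2) F) ∣
        (C b₁ * X 0 ^ 2 + C b₂ * X 0 * X 1 + C b₃ * X 1 ^ 2)))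
    (hdisc : b₂ ^ 2 - 4 * b₁ * b₃ = 0) :
    ∃ c : F, c ≠ 0 ∧ ∀ x y : F, ∃ m : F,
      b₁ * x ^ 2 + b₂ * x * y + b₃ * y ^ 2 = c * m ^ 2 := by
  have h2 : (2 : F) ≠ 0 := Ring.two_ne_zero (stmt9_char F hq)
  by_cases hb₁ : b₁ ≠ 0
  · refine ⟨b₁, hb₁, fun x y => ⟨x + b₂ / (2 * b₁) * y, ?_⟩⟩
    field_simp
    linear_combination (-y ^ 2) * hdisc
  · push_neg at hb₁
    subst hb₁
    have hb₂ : b₂ = 0 := by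
      have : b₂ ^ 2 = 0 := by linear_combination hdisc
      exact pow_eq_zero_iff (n := 2) (by norm_num) |>.mp this
    subst hb₂
    by_cases hb₃ : b₃ ≠ 0
    · exact ⟨b₃, hb₃, fun x y => ⟨y, by ring⟩⟩
    · push_neg at hb₃
      subst hb₃
      exfalso
      apply hdvd
      have : (C (0:F) * X 0 ^ 2 + C (0:F) * X 0 * X 1 + C (0:F) * X 1 ^ 2 :
          MvPolynomial (Fin 2) F) = 0 := by simp
      rw [this]
      exact dvd_zero _

theorem stmt_9 (F : Type) [Field F] [Fintype F] (hq : Odd (Fintype.card F))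
    (a₁ a₂ b₁ b₂ b₃ : F) (hL : a₁ ≠ 0 ∨ a₂ ≠ 0)
    (hdvd : ¬ ((C a₁ * X 0 + C a₂ * X 1 : MvPolynomial (Fin 2) F) ∣
        (C b₁ * X 0 ^ 2 + C b₂ * X 0 * X 1 + C b₃ * X 1 ^ 2)))
    (hdisc : b₂ ^ 2 - 4 * b₁ * b₃ = 0) :
    ∃ A : Set F, (Fintype.card F - 1) / 2 ≤ A.ncard ∧
      ∀ x y : F, ¬ (a₁ * x + a₂ * y ∈ A ∧
        b₁ * x ^ 2 + b₂ * x * y + b₃ * y ^ 2 ∈ A) := by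
  obtain ⟨c, hc, hQ⟩ := stmt9_sq F hq a₁ a₂ b₁ b₂ b₃ hL hdvd hdisc
  refine ⟨(fun x => c * x) '' {x : F | ¬ IsSquare x}, ?_, ?_⟩
  · rw [Set.ncard_image_of_injOn (fun a _ b _ h => mul_left_cancel₀ hc h)]
    exact stmt9_count F hq
  · rintro x y ⟨-, t, ht, hteq⟩
    obtain ⟨m, hm⟩ := hQ x y
    apply ht
    have h1 : c * t = c * m ^ 2 := by rw [← hm]; exact hteq
    have h2 : t = m ^ 2 := mul_left_cancel₀ hc h1
    exact ⟨m, by rw [h2]; ring⟩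
end

section
/- Let Γ be a finite graph on vertex set V with |V| = n such that for every subset W ⊆ V with |W| ≥ m (where m ≤ n/16), there is a vertex w ∈ W adjacent to at least |W|/8 vertices of W. Then Γ contains a clique of size at least ⌊log(n/m)/log 16⌋. -/
lemma aux_clique (V : Type) [Fintype V] [DecidableEq V]
    (Γ : SimpleGraph V) [DecidableRel Γ.Adj]
    (m : ℕ) (hm : 0 < m)
    (h : ∀ W : Finset V, m ≤ W.card →
      ∃ w ∈ W, (W.card : ℝ) / 8 ≤ (W.filter (fun v => Γ.Adj w v)).card) :
    ∀ k : ℕ, ∀ W : Finset V, (m : ℝ) * 16 ^ k ≤ W.card →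
      ∃ S : Finset V, S ⊆ W ∧ Γ.IsClique ↑S ∧ S.card = k := by
  intro k
  induction k with
  | zero => intro W _; exact ⟨∅, by simp, by simp, by simp⟩
  | succ k ih =>
    intro W hW
    have hpow : (0:ℝ) < 16 ^ k := by positivity
    have hpow1 : (1:ℝ) ≤ 16 ^ k := one_le_pow₀ (by norm_num)
    have hm' : (1:ℝ) ≤ m := by exact_mod_cast hm
    have hpow1' : (1:ℝ) ≤ 16 ^ (k+1) := one_le_pow₀ (by norm_num)
    have hmW : m ≤ W.card := by
      have : (m:ℝ) ≤ W.card := by nlinarith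
      exact_mod_cast this
    obtain ⟨w, hwW, hdeg⟩ := h W hmW
    have hW'card : (m : ℝ) * 16 ^ k ≤ (W.filter (fun v => Γ.Adj w v)).card := by
      have h1 : (m:ℝ) * 16 ^ (k+1) ≤ W.card := hW
      have h2 : (m:ℝ) * 16 ^ (k+1) = 16 * (m * 16 ^ k) := by ring
      nlinarith
    obtain ⟨S, hSW', hScl, hScard⟩ := ih _ hW'card
    have hwS : w ∉ S := by
      intro hw
      have := hSW' hw
      simp only [Finset.mem_filter] at this
      exact Γ.irrefl this.2
    refine ⟨insert w S, ?_, ?_, ?_⟩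
    · intro x hx
      rcases Finset.mem_insert.mp hx with rfl | hx
      · exact hwW
      · exact (Finset.filter_subset _ _) (hSW' hx)
    · rw [Finset.coe_insert]
      refine hScl.insert fun b hb hne => ?_
      have := hSW' hb
      simp only [Finset.mem_filter] at this
      exact this.2
    · rw [Finset.card_insert_of_notMem hwS, hScard]

theorem stmt_17 (V : Type) [Fintype V] [DecidableEq V]
    (Γ : SimpleGraph V) [DecidableRel Γ.Adj]
    (m : ℕ) (hm : 0 < m) (hmn : (m : ℝ) ≤ Fintype.card V / 16)
    (h : ∀ W : Finset V, m ≤ W.card →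
      ∃ w ∈ W, (W.card : ℝ) / 8 ≤ (W.filter (fun v => Γ.Adj w v)).card) :
    ∃ S : Finset V, Γ.IsClique ↑S ∧
      ⌊Real.log ((Fintype.card V : ℝ) / m) / Real.log 16⌋₊ ≤ S.card := by
  set n := Fintype.card V
  set k := ⌊Real.log ((n : ℝ) / m) / Real.log 16⌋₊ with hk
  have hm' : (0:ℝ) < m := by exact_mod_cast hm
  have hn16 : (16:ℝ) * m ≤ n := by
    rw [le_div_iff₀ (by norm_num)] at hmn; linarith
  have hquot : (16:ℝ) ≤ (n:ℝ)/m := by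
    rw [le_div_iff₀ hm']; linarith
  have hlog16 : (0:ℝ) < Real.log 16 := Real.log_pos (by norm_num)
  have hfl : (k:ℝ) ≤ Real.log ((n : ℝ) / m) / Real.log 16 :=
    Nat.floor_le (div_nonneg (Real.log_nonneg (by linarith)) hlog16.le)
  have hkl : (k:ℝ) * Real.log 16 ≤ Real.log ((n : ℝ) / m) :=
    (le_div_iff₀ hlog16).mp hfl
  have hpow : (16:ℝ) ^ k ≤ (n:ℝ) / m := by
    have h1 : Real.log ((16:ℝ) ^ k) ≤ Real.log ((n:ℝ)/m) := by
      rw [Real.log_pow]; exact_mod_cast hkl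
    have h2 : (0:ℝ) < (16:ℝ)^k := by positivity
    calc (16:ℝ)^k = Real.exp (Real.log ((16:ℝ)^k)) := (Real.exp_log h2).symm
      _ ≤ Real.exp (Real.log ((n:ℝ)/m)) := Real.exp_le_exp.mpr h1
      _ = (n:ℝ)/m := Real.exp_log (by positivity)
  have hmain : (m:ℝ) * 16 ^ k ≤ (Finset.univ : Finset V).card := by
    rw [Finset.card_univ]
    rw [le_div_iff₀ hm'] at hpow
    nlinarith
  obtain ⟨S, _, hScl, hScard⟩ :=
    aux_clique V Γ m hm h k Finset.univ hmain
  exact ⟨S, hScl, hScard.ge⟩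
end

section
/- Let N be odd, p a prime dividing N, and L(X,Y) = a₁X + a₂Y with gcd(a₁, N) = 1, Q a binary quadratic form over ℤ/Nℤ. Suppose t mod p is such that the discriminant of the quadratic polynomial Q(a₁⁻¹(t - a₂Y), Y) - t in Y is a quadratic nonresidue mod p. Then the set A = {a mod N : a ≡ t mod p}, which has density 1/p in ℤ/Nℤ, contains no pair L(x,y), Q(x,y): there are no x, y ∈ ℤ/Nℤ with both L(x,y) ∈ A and Q(x,y) ∈ A. -/
theorem stmt_19 (N : ℕ) (hN : Odd N) (p : ℕ) (hp : p.Prime) (hpN : p ∣ N)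
    (a₁ a₂ b₁ b₂ b₃ t : ZMod N) (ha₁ : IsUnit a₁)
    (R S U : ZMod N)
    (hRSU : ∀ y : ZMod N,
      b₁ * (a₁⁻¹ * (t - a₂ * y)) ^ 2 + b₂ * (a₁⁻¹ * (t - a₂ * y)) * y +
        b₃ * y ^ 2 - t = R * y ^ 2 + S * y + U)
    (hΔ : ¬ IsSquare (ZMod.castHom hpN (ZMod p) (S ^ 2 - 4 * R * U)))
    (A : Set (ZMod N))
    (hA : A = {a : ZMod N |
      ZMod.castHom hpN (ZMod p) a = ZMod.castHom hpN (ZMod p) t}) :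
    A.ncard = N / p ∧
      ¬ ∃ x y : ZMod N, a₁ * x + a₂ * y ∈ A ∧
        b₁ * x ^ 2 + b₂ * x * y + b₃ * y ^ 2 ∈ A := by
  have hN0 : 0 < N := hN.pos
  haveI : NeZero N := ⟨hN0.ne'⟩
  haveI : NeZero p := ⟨hp.ne_zero⟩
  set f := ZMod.castHom hpN (ZMod p) with hf
  constructor
  · -- cardinality
    set φ := f.toAddMonoidHom with hφ
    have hφa : ∀ a : ZMod N, φ a = f a := fun _ => rfl
    have hsurj : Function.Surjective φ := by
      intro b
      refine ⟨(b.val : ZMod N), ?_⟩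
      rw [hφa, map_natCast, ZMod.natCast_zmod_val]
    have hcard : Nat.card φ.ker * p = N := by
      have e := QuotientAddGroup.quotientKerEquivOfSurjective φ hsurj
      have h1 : Nat.card (ZMod N) = Nat.card (ZMod N ⧸ φ.ker) * Nat.card φ.ker :=
        AddSubgroup.card_eq_card_quotient_mul_card_addSubgroup φ.ker
      have h2 : Nat.card (ZMod N ⧸ φ.ker) = p := by
        rw [Nat.card_congr e.toEquiv, Nat.card_zmod]
      rw [h2, Nat.card_zmod] at h1
      rw [mul_comm, ← h1]
    have e2 : {a : ZMod N | φ a = φ t} ≃ φ.ker :=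
      { toFun := fun a => ⟨a.1 - t, by
          have ha : φ a.1 = φ t := a.2
          simp [AddMonoidHom.mem_ker, map_sub, ha]⟩
        invFun := fun a => ⟨a.1 + t, by
          have := a.2
          simp only [AddMonoidHom.mem_ker] at this
          simp [Set.mem_setOf_eq, map_add, this]⟩
        left_inv := fun a => by simp
        right_inv := fun a => by simp }
    have hk : ({a : ZMod N | φ a = φ t}).ncard = Nat.card φ.ker := by
      rw [← Nat.card_coe_set_eq, Nat.card_congr e2]
    have hset : A = {a : ZMod N | φ a = φ t} := hA
    rw [hset, hk]
    exact (Nat.div_eq_of_eq_mul_left hp.pos hcard.symm).symm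
  · rintro ⟨x, y, hL, hQ⟩
    rw [hA, Set.mem_setOf_eq] at hL hQ
    -- f x = f (a₁⁻¹ * (t - a₂ * y))
    have hinv : a₁⁻¹ * a₁ = 1 := ZMod.inv_mul_of_unit a₁ ha₁
    have hinv' : f a₁⁻¹ * f a₁ = 1 := by rw [← map_mul, hinv, map_one]
    have hx : f a₁⁻¹ * (f t - f a₂ * f y) = f x := by
      have h1 : f a₁ * f x + f a₂ * f y = f t := by
        rw [← map_mul, ← map_mul, ← map_add, hL]
      calc f a₁⁻¹ * (f t - f a₂ * f y)
          = f a₁⁻¹ * (f a₁ * f x) := by rw [← h1]; ring_nf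
        _ = f x := by rw [← mul_assoc, hinv', one_mul]
    -- apply f to hRSU y
    have hroot : f R * f y ^ 2 + f S * f y + f U = 0 := by
      have h2 := congrArg f (hRSU y)
      simp only [map_add, map_sub, map_mul, map_pow] at h2
      rw [hx] at h2
      have h3 : f b₁ * f x ^ 2 + f b₂ * f x * f y + f b₃ * f y ^ 2 = f t := by
        have := hQ
        simpa only [map_add, map_mul, map_pow] using this
      rw [← h2]
      rw [h3]
      ring
    apply hΔ
    refine ⟨2 * f R * f y + f S, ?_⟩
    have hmap : f (S ^ 2 - 4 * R * U) = f S ^ 2 - 4 * f R * f U := by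
      simp only [map_sub, map_mul, map_pow, map_ofNat]
    rw [hmap]
    linear_combination (-4 : ZMod p) * f R * hroot
end
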